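/- Let S be an inverse semigroup with zero. Then S is quasi-fundamental if and only if whenever s, t are non-zero elements of S such that s e s* = t e t* for every idempotent e of S, there exists a non-zero element u with u ≤ s and u ≤ t in the natural partial order. -/

import Mathlib

/-!
Forward: taking `e = s* s` in `s e s* = t e t*` gives `t t* s = s`, and then `t* s` commutes
with every idempotent. A non-zero idempotent `f ≤ t* s` yields `s f = t t* s f = t f`, a common
non-zero lower bound of `s` and `t`.

Backward: a non-zero `z` commuting with the idempotents satisfies `z e z* = (z z*) e (z z*)*`, so
`z` and the idempotent `z z*` have a common non-zero lower bound, which is idempotent because it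
lies below an idempotent.
-/

/-- An inverse semigroup with zero: a semigroup with an absorbing zero in which every
element `s` has a unique generalized inverse `star s`. -/
class InverseSemigroup0 (S : Type*) extends Semigroup S, Zero S, Star S where
  zero_mul : ∀ s : S, 0 * s = 0
  mul_zero : ∀ s : S, s * 0 = 0
  mul_star_mul_self : ∀ s : S, s * star s * s = s
  star_mul_self_star : ∀ s : S, star s * s * star s = star s
  star_unique : ∀ s t : S, s * t * s = s → t * s * t = t → t = star s

/-- The natural partial order on an inverse semigroup: `a ≤ b` iff `a = b * a* * a`. -/
def NatLe {S : Type*} [InverseSemigroup0 S] (a b : S) : Prop := a = b * star a * a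

/-- `S` is quasi-fundamental if every non-zero element of the centralizer of the
idempotents lies above some non-zero idempotent in the natural partial order. -/
def QuasiFundamental (S : Type*) [InverseSemigroup0 S] : Prop :=
  ∀ s : S, s ≠ 0 → (∀ e : S, IsIdempotentElem e → s * e = e * s) →
    ∃ e : S, e ≠ 0 ∧ IsIdempotentElem e ∧ NatLe e s

namespace InverseSemigroup0

variable {S : Type*} [InverseSemigroup0 S]

theorem star_star (s : S) : star (star s) = s :=
  (star_unique _ _ (star_mul_self_star s) (mul_star_mul_self s)).symm

theorem star_eq_self_of_isIdempotentElem {e : S} (he : IsIdempotentElem e) : star e = e :=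
  (star_unique e e (by rw [he.eq, he.eq]) (by rw [he.eq, he.eq])).symm

theorem isIdempotentElem_star_mul_self (s : S) : IsIdempotentElem (star s * s) := by
  rw [IsIdempotentElem, ← mul_assoc, star_mul_self_star]

theorem isIdempotentElem_mul_star_self (s : S) : IsIdempotentElem (s * star s) := by
  rw [IsIdempotentElem, ← mul_assoc, mul_star_mul_self]

theorem mul_mul_cancel_left_of_isIdempotentElem {e : S} (he : IsIdempotentElem e) (x : S) :
    e * (e * x) = e * x := by
  rw [← mul_assoc, he.eq]

theorem mul_star_mul_self_mul (s x : S) : s * (star s * (s * x)) = s * x := by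
  simp only [← mul_assoc, mul_star_mul_self]

theorem star_mul_self_star_mul (s x : S) : star s * (s * (star s * x)) = star s * x := by
  simp only [← mul_assoc, star_mul_self_star]

/-- `f (ef)* e` is an inverse of `ef`, hence equal to `(ef)*`, which makes `(ef)*` idempotent;
then so is its inverse `ef`. -/
theorem isIdempotentElem_mul {e f : S} (he : IsIdempotentElem e) (hf : IsIdempotentElem f) :
    IsIdempotentElem (e * f) := by
  set x := star (e * f) with hx
  have hefx : e * (f * (x * (e * f))) = e * f := by
    simpa only [mul_assoc] using mul_star_mul_self (e * f)
  have hxef : x * (e * (f * x)) = x := by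
    simpa only [mul_assoc] using star_mul_self_star (e * f)
  have hxe := mul_mul_cancel_left_of_isIdempotentElem he
  have hxf := mul_mul_cancel_left_of_isIdempotentElem hf
  have hfxe : f * x * e = x := by
    refine (star_unique (e * f) (f * x * e) ?_ ?_).trans hx.symm
    · simp only [mul_assoc, hxe, hxf, hefx]
    · calc f * x * e * (e * f) * (f * x * e) = f * (x * (e * (f * x)) * e) := by
            simp only [mul_assoc, hxe, hxf]
        _ = f * x * e := by rw [hxef, mul_assoc]
  have hx_idem : IsIdempotentElem x := by
    rw [IsIdempotentElem, ← hfxe]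
    calc f * x * e * (f * x * e) = f * (x * (e * (f * x)) * e) := by simp only [mul_assoc]
      _ = f * x * e := by rw [hxef, mul_assoc]
  rwa [← star_star (e * f), ← hx, star_eq_self_of_isIdempotentElem hx_idem]

theorem commute_of_isIdempotentElem {e f : S} (he : IsIdempotentElem e)
    (hf : IsIdempotentElem f) : e * f = f * e := by
  have hxe := mul_mul_cancel_left_of_isIdempotentElem he
  have hxf := mul_mul_cancel_left_of_isIdempotentElem hf
  have hinv : f * e = star (e * f) := by
    refine star_unique _ _ ?_ ?_
    · simpa only [mul_assoc, hxe, hxf] using (isIdempotentElem_mul he hf).eq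
    · simpa only [mul_assoc, hxe, hxf] using (isIdempotentElem_mul hf he).eq
  rw [hinv, star_eq_self_of_isIdempotentElem (isIdempotentElem_mul he hf)]

theorem star_mul (a b : S) : star (a * b) = star b * star a := by
  have hcomm := commute_of_isIdempotentElem (isIdempotentElem_mul_star_self b)
    (isIdempotentElem_star_mul_self a)
  refine (star_unique _ _ ?_ ?_).symm
  · calc a * b * (star b * star a) * (a * b)
        = a * ((b * star b) * (star a * a)) * b := by simp only [mul_assoc]
      _ = (a * star a * a) * (b * star b * b) := by rw [hcomm]; simp only [mul_assoc]
      _ = a * b := by rw [mul_star_mul_self, mul_star_mul_self]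
  · calc star b * star a * (a * b) * (star b * star a)
        = star b * ((star a * a) * (b * star b)) * star a := by simp only [mul_assoc]
      _ = (star b * b * star b) * (star a * a * star a) := by rw [← hcomm]; simp only [mul_assoc]
      _ = star b * star a := by rw [star_mul_self_star, star_mul_self_star]

theorem natLe_mul_of_isIdempotentElem (s : S) {f : S} (hf : IsIdempotentElem f) :
    NatLe (s * f) s := by
  have hcomm := commute_of_isIdempotentElem hf (isIdempotentElem_star_mul_self s)
  calc s * f = s * star s * s * f := by rw [mul_star_mul_self]
    _ = s * (star s * s * (f * f)) := by rw [hf.eq]; simp only [mul_assoc]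
    _ = s * (f * (star s * s) * f) := by rw [hcomm]; simp only [mul_assoc]
    _ = s * star (s * f) * (s * f) := by
      rw [star_mul, star_eq_self_of_isIdempotentElem hf]; simp only [mul_assoc]

theorem NatLe.eq_mul_of_isIdempotentElem {f z : S} (h : NatLe f z) (hf : IsIdempotentElem f) :
    f = z * f := by
  rwa [NatLe, star_eq_self_of_isIdempotentElem hf, mul_assoc, hf.eq] at h

theorem NatLe.isIdempotentElem {u e : S} (h : NatLe u e) (he : IsIdempotentElem e) :
    IsIdempotentElem u := by
  have hu : u = e * (star u * u) := by rw [← mul_assoc]; exact h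
  have hcomm := commute_of_isIdempotentElem (isIdempotentElem_star_mul_self u) he
  rw [IsIdempotentElem, hu]
  calc e * (star u * u) * (e * (star u * u))
      = (e * e) * ((star u * u) * (star u * u)) := by
        rw [← mul_assoc, mul_assoc e, hcomm]; simp only [mul_assoc]
    _ = e * (star u * u) := by rw [he.eq, (isIdempotentElem_star_mul_self u).eq]

theorem ne_zero_of_mul_ne_zero_left {a b : S} (h : a * b ≠ 0) : b ≠ 0 := by
  rintro rfl
  exact h (InverseSemigroup0.mul_zero a)

section Conjugation

variable {s t : S} (hst : ∀ e : S, IsIdempotentElem e → s * e * star s = t * e * star t)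
include hst

theorem mul_star_mul_of_conj_eq : t * star t * s = s := by
  have hss : s * star s = t * (star s * s) * star t := by
    rw [← hst _ (isIdempotentElem_star_mul_self s), ← mul_assoc, mul_star_mul_self]
  have htts : t * star t * (s * star s) = s * star s := by
    rw [hss]; simp only [mul_assoc, mul_star_mul_self_mul]
  calc t * star t * s = t * star t * (s * star s) * s := by
        rw [mul_assoc _ (s * star s), mul_star_mul_self]
    _ = s := by rw [htts, mul_star_mul_self]

theorem star_mul_commute_of_conj_eq {e : S} (he : IsIdempotentElem e) :
    star t * s * e = e * (star t * s) := by
  have hse : s * e = s * e * star s * s := by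
    calc s * e = s * (star s * s * e) := by rw [← mul_assoc, ← mul_assoc, mul_star_mul_self]
      _ = s * (e * (star s * s)) := by
        rw [commute_of_isIdempotentElem he (isIdempotentElem_star_mul_self s)]
      _ = s * e * star s * s := by simp only [mul_assoc]
  calc star t * s * e = star t * (s * e * star s * s) := by rw [mul_assoc, ← hse]
    _ = star t * t * e * (star t * s) := by rw [hst e he]; simp only [mul_assoc]
    _ = e * (star t * t) * (star t * s) := by
        rw [commute_of_isIdempotentElem (isIdempotentElem_star_mul_self t) he]
    _ = e * (star t * s) := by simp only [mul_assoc, star_mul_self_star_mul]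

end Conjugation

theorem conj_eq_conj_mul_star_self {z : S} (hz : ∀ e : S, IsIdempotentElem e → z * e = e * z)
    {e : S} (he : IsIdempotentElem e) :
    z * e * star z = z * star z * e * star (z * star z) := by
  have hzz := isIdempotentElem_mul_star_self z
  rw [star_eq_self_of_isIdempotentElem hzz, mul_assoc (z * star z) e,
    commute_of_isIdempotentElem he hzz, mul_mul_cancel_left_of_isIdempotentElem hzz,
    ← commute_of_isIdempotentElem he hzz, hz e he, mul_assoc]

end InverseSemigroup0

open InverseSemigroup0 in
/-- An inverse semigroup with zero is quasi-fundamental iff any two non-zero elements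
`s, t` with `s e s* = t e t*` for all idempotents `e` have a common non-zero lower
bound in the natural partial order. -/
theorem stmt0 (S : Type*) [InverseSemigroup0 S] :
    QuasiFundamental S ↔
      ∀ s t : S, s ≠ 0 → t ≠ 0 →
        (∀ e : S, IsIdempotentElem e → s * e * star s = t * e * star t) →
        ∃ u : S, u ≠ 0 ∧ NatLe u s ∧ NatLe u t := by
  constructor
  · intro hQF s t hs _ hst
    have htts := mul_star_mul_of_conj_eq hst
    have hz : star t * s ≠ 0 :=
      ne_zero_of_mul_ne_zero_left (a := t) (by rwa [← mul_assoc, htts])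
    obtain ⟨f, hf0, hf, hfz⟩ := hQF _ hz fun e he => star_mul_commute_of_conj_eq hst he
    have hf_eq : f = star t * (s * f) := by
      rw [← mul_assoc]; exact hfz.eq_mul_of_isIdempotentElem hf
    have hsf : s * f = t * f := by
      calc s * f = t * star t * s * f := by rw [htts]
        _ = t * (star t * (s * f)) := by simp only [mul_assoc]
        _ = t * f := by rw [← hf_eq]
    refine ⟨s * f, ne_zero_of_mul_ne_zero_left (a := star t) (hf_eq ▸ hf0),
      natLe_mul_of_isIdempotentElem s hf, ?_⟩
    rw [hsf]
    exact natLe_mul_of_isIdempotentElem t hf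
  · intro H z hz hzc
    have hzz : z * star z ≠ 0 := fun h0 => hz <| by
      rw [← mul_star_mul_self z, h0, InverseSemigroup0.zero_mul]
    obtain ⟨u, hu0, huz, huzz⟩ := H z _ hz hzz fun e he => conj_eq_conj_mul_star_self hzc he
    exact ⟨u, hu0, huzz.isIdempotentElem (isIdempotentElem_mul_star_self z), huz⟩
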